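/- arXiv:1805.01876 — 4 statements merged into one kernel-verified Lean document; each statement's English description precedes it below -/
import Mathlib

section
/- Let s, t be strings over α with real first mismatches on the smaller side: x = μ_w(s) < |s| with s[x] < w(x), and y = μ_w(t) < |t| with t[y] < w(y); if x = y assume additionally s[x] ≠ t[x]. Then s <lex t if and only if x < y, or x = y and s[x] < t[x]. -/
/-- First-mismatch index of the string `s` with respect to the reference sequence `w`:
the least `i < s.length` with `s[i] ≠ w i`, or `s.length` if no such `i` exists. -/
def mu {α : Type*} [DecidableEq α] (w : ℕ → α) (s : List α) : ℕ :=
  Nat.find (p := fun i => i = s.length ∨ (i < s.length ∧ s.getD i (w i) ≠ w i))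
    ⟨s.length, Or.inl rfl⟩

lemma lex_of_eq_lt {α : Type*} [LinearOrder α] :
    ∀ (n : ℕ) (s t : List α), (∀ i, i < n → s[i]? = t[i]?) →
    ∀ a b, s[n]? = some a → t[n]? = some b → a < b → s < t := by
  intro n
  induction n with
  | zero =>
    intro s t _ a b hsa htb hab
    match s, t with
    | a' :: s', b' :: t' =>
      simp at hsa htb
      subst hsa; subst htb
      show List.Lex (· < ·) _ _
      exact List.Lex.rel hab
  | succ n ih =>
    intro s t heq a b hsa htb hab
    match s, t with
    | a' :: s', b' :: t' =>
      have h0 := heq 0 (Nat.succ_pos n)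
      simp at h0
      subst h0
      have hst : s' < t' := by
        refine ih s' t' (fun i hi => ?_) a b (by simpa using hsa) (by simpa using htb) hab
        have := heq (i + 1) (by omega)
        simpa using this
      show List.Lex (· < ·) _ _
      exact List.Lex.cons hst

lemma mu_spec {α : Type*} [DecidableEq α] (w : ℕ → α) (s : List α)
    (h : mu w s < s.length) :
    (∀ i, i < mu w s → s[i]? = some (w i)) ∧ s[mu w s]? = some (s.getD (mu w s) (w (mu w s))) := by
  constructor
  · intro i hi
    have hmin := Nat.find_min (p := fun i => i = s.length ∨ (i < s.length ∧ s.getD i (w i) ≠ w i))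
      ⟨s.length, Or.inl rfl⟩ hi
    have hil : i < s.length := hi.trans h
    have : s.getD i (w i) = w i := by
      by_contra hc
      exact hmin (Or.inr ⟨hil, hc⟩)
    rw [List.getD_eq_getElem?_getD, List.getElem?_eq_getElem hil] at this
    simp at this
    rw [List.getElem?_eq_getElem hil, this]
  · rw [List.getD_eq_getElem?_getD, List.getElem?_eq_getElem h]
    simp

lemma lex_of_mismatch {α : Type*} [LinearOrder α]
    (w : ℕ → α) (s t : List α)
    (hxs : mu w s < s.length) (hs : s.getD (mu w s) (w (mu w s)) < w (mu w s))
    (hyt : mu w t < t.length)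
    (hord : mu w s < mu w t ∨
      (mu w s = mu w t ∧ s.getD (mu w s) (w (mu w s)) < t.getD (mu w t) (w (mu w t)))) :
    s < t := by
  obtain ⟨hps, hps'⟩ := mu_spec w s hxs
  obtain ⟨hpt, hpt'⟩ := mu_spec w t hyt
  rcases hord with hlt | ⟨heq, hlt⟩
  · refine lex_of_eq_lt (mu w s) s t (fun i hi => ?_) _ _ hps' (hpt _ hlt) hs
    rw [hps i hi, hpt i (hi.trans hlt)]
  · refine lex_of_eq_lt (mu w s) s t (fun i hi => ?_) _ _ hps' (heq ▸ hpt') hlt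
    rw [hps i hi, hpt i (heq ▸ hi)]

/-- Among strings whose leftmost mismatch letter is smaller than the corresponding
reference letter, the lexicographic order coincides with ordering first by increasing
position of the leftmost mismatch and then by the mismatch letter. -/
theorem lt_iff_mismatch_order {α : Type*} [LinearOrder α]
    (w : ℕ → α) (s t : List α)
    (hxs : mu w s < s.length) (hs : s.getD (mu w s) (w (mu w s)) < w (mu w s))
    (hyt : mu w t < t.length) (ht : t.getD (mu w t) (w (mu w t)) < w (mu w t))
    (hne : mu w s = mu w t →
      s.getD (mu w s) (w (mu w s)) ≠ t.getD (mu w t) (w (mu w t))) :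
    s < t ↔ (mu w s < mu w t ∨
      (mu w s = mu w t ∧ s.getD (mu w s) (w (mu w s)) < t.getD (mu w t) (w (mu w t)))) := by
  constructor
  · intro hst
    by_contra hcon
    push_neg at hcon
    obtain ⟨h1, h2⟩ := hcon
    have : t < s := by
      apply lex_of_mismatch w t s hyt ht hxs
      rcases lt_trichotomy (mu w t) (mu w s) with h | h | h
      · exact Or.inl h
      · refine Or.inr ⟨h, ?_⟩
        have hne' := hne h.symm
        have := h2 h.symm
        exact lt_of_le_of_ne this (fun e => hne' e.symm)
      · exact absurd h (not_lt.mpr (h1))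
    exact absurd hst (not_lt.mpr this.le)
  · exact lex_of_mismatch w s t hxs hs hyt
end

section
/- Let s_1 ≤lex s_2 ≤lex … ≤lex s_N be a lexicographically sorted sequence of strings over α such that each s_i has a real first mismatch on the smaller side, i.e. μ_i := μ_w(s_i) < |s_i| and s_i[μ_i] < w(μ_i), and such that for i ≠ j, if μ_i = μ_j then s_i[μ_i] ≠ s_j[μ_j]. Then μ_1 ≤ μ_2 ≤ … ≤ μ_N, and lcp(s_i, s_{i+1}) = μ_i for every 1 ≤ i ≤ N−1; in particular the consecutive-LCP sequence lcp(s_1,s_2), …, lcp(s_{N−1},s_N) is non-decreasing. -/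
/-- Length of the longest common prefix of two lists. -/
def lcp {α : Type*} [DecidableEq α] : List α → List α → ℕ
  | a :: s, b :: t => if a = b then lcp s t + 1 else 0
  | _, _ => 0

lemma mu_le_length {α : Type*} [DecidableEq α] (w : ℕ → α) (s : List α) :
    mu w s ≤ s.length := by
  rcases Nat.find_spec (p := fun i => i = s.length ∨ (i < s.length ∧ s.getD i (w i) ≠ w i))
    ⟨s.length, Or.inl rfl⟩ with h | h
  · exact h.le
  · exact h.1.le

lemma mu_agree {α : Type*} [DecidableEq α] (w : ℕ → α) (s : List α) {k : ℕ}
    (hk : k < mu w s) : s.getD k (w k) = w k := by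
  have hmin := Nat.find_min (p := fun i => i = s.length ∨ (i < s.length ∧ s.getD i (w i) ≠ w i))
    ⟨s.length, Or.inl rfl⟩ hk
  have hk' : k < s.length := lt_of_lt_of_le hk (mu_le_length w s)
  rcases not_or.mp hmin with ⟨-, h2⟩
  by_contra hne
  exact h2 ⟨hk', hne⟩

lemma lt_of_agree {α : Type*} [LinearOrder α] :
    ∀ (m : ℕ) (w : ℕ → α) (t u : List α),
      (∀ k, k < m → t.getD k (w k) = u.getD k (w k)) →
      m < t.length → m < u.length →
      t.getD m (w m) < u.getD m (w m) → t < u := by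
  intro m
  induction m with
  | zero =>
    intro w t u _ ht hu hlt
    match t, u with
    | a :: t', b :: u' =>
      simp only [List.getD_cons_zero] at hlt
      exact List.Lex.rel hlt
  | succ n ih =>
    intro w t u hag ht hu hlt
    match t, u with
    | a :: t', b :: u' =>
      have hab : a = b := by simpa using hag 0 (Nat.succ_pos n)
      have h' : t' < u' := ih (fun k => w (k + 1)) t' u'
        (fun k hk => by simpa using hag (k + 1) (Nat.succ_lt_succ hk))
        (by simpa using ht) (by simpa using hu) (by simpa using hlt)
      subst hab
      exact List.Lex.cons h'

lemma lcp_eq_of_agree {α : Type*} [LinearOrder α] :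
    ∀ (m : ℕ) (w : ℕ → α) (t u : List α),
      (∀ k, k < m → t.getD k (w k) = u.getD k (w k)) →
      m < t.length → m < u.length →
      t.getD m (w m) ≠ u.getD m (w m) → lcp t u = m := by
  intro m
  induction m with
  | zero =>
    intro w t u _ ht hu hne
    match t, u with
    | a :: t', b :: u' =>
      simp only [List.getD_cons_zero] at hne
      simp [lcp, hne]
  | succ n ih =>
    intro w t u hag ht hu hne
    match t, u with
    | a :: t', b :: u' =>
      have hab : a = b := by simpa using hag 0 (Nat.succ_pos n)
      have h' : lcp t' u' = n := ih (fun k => w (k + 1)) t' u'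
        (fun k hk => by simpa using hag (k + 1) (Nat.succ_lt_succ hk))
        (by simpa using ht) (by simpa using hu) (by simpa using hne)
      simp [lcp, hab, h']

/-- Let `s 1 ≤ … ≤ s N` (lexicographically) be strings over `α`, each having a real
first mismatch with the reference `w` carrying a letter smaller than the reference
letter, and such that no two of them have their first mismatches at the same position
with the same letter.  Then the first-mismatch positions are non-decreasing,
`lcp (s i) (s (i+1)) = mu w (s i)` for every `1 ≤ i ≤ N - 1`, and in particular the
consecutive-LCP sequence is non-decreasing. -/
theorem mu_monotone_and_lcp_eq_mu {α : Type*} [LinearOrder α]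
    (w : ℕ → α) (N : ℕ) (s : ℕ → List α)
    (hsorted : ∀ i j, 1 ≤ i → i ≤ j → j ≤ N → s i ≤ s j)
    (hmis : ∀ i, 1 ≤ i → i ≤ N →
      mu w (s i) < (s i).length ∧
      (s i).getD (mu w (s i)) (w (mu w (s i))) < w (mu w (s i)))
    (hdist : ∀ i j, 1 ≤ i → i ≤ N → 1 ≤ j → j ≤ N → i ≠ j →
      mu w (s i) = mu w (s j) →
      (s i).getD (mu w (s i)) (w (mu w (s i))) ≠ (s j).getD (mu w (s j)) (w (mu w (s j)))) :
    (∀ i j, 1 ≤ i → i ≤ j → j ≤ N → mu w (s i) ≤ mu w (s j)) ∧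
    (∀ i, 1 ≤ i → i + 1 ≤ N → lcp (s i) (s (i + 1)) = mu w (s i)) ∧
    (∀ i j, 1 ≤ i → i ≤ j → j + 1 ≤ N →
      lcp (s i) (s (i + 1)) ≤ lcp (s j) (s (j + 1))) := by
  have mono : ∀ i j, 1 ≤ i → i ≤ j → j ≤ N → mu w (s i) ≤ mu w (s j) := by
    intro i j h1 hij hjN
    by_contra hlt
    push_neg at hlt
    have hiN : i ≤ N := le_trans hij hjN
    have hj1 : 1 ≤ j := le_trans h1 hij
    have hjlen := (hmis j hj1 hjN).1
    have hslt : s j < s i := by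
      apply lt_of_agree (mu w (s j)) w
      · intro k hk
        rw [mu_agree w (s j) hk, mu_agree w (s i) (lt_trans hk hlt)]
      · exact hjlen
      · exact lt_of_lt_of_le hlt (mu_le_length w (s i))
      · have h1' := (hmis j hj1 hjN).2
        have h2' : (s i).getD (mu w (s j)) (w (mu w (s j))) = w (mu w (s j)) :=
          mu_agree w (s i) hlt
        rw [h2']
        exact h1'
    exact absurd hslt (not_lt.mpr (hsorted i j h1 hij hjN))
  have lcpmu : ∀ i, 1 ≤ i → i + 1 ≤ N → lcp (s i) (s (i + 1)) = mu w (s i) := by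
    intro i h1 hN
    have hiN : i ≤ N := le_trans (Nat.le_succ i) hN
    have hmu := mono i (i + 1) h1 (Nat.le_succ i) hN
    have hilen := (hmis i h1 hiN).1
    have hi1len : mu w (s i) < (s (i + 1)).length :=
      lt_of_le_of_lt hmu (hmis (i + 1) (le_trans h1 (Nat.le_succ i)) hN).1
    apply lcp_eq_of_agree (mu w (s i)) w
    · intro k hk
      rw [mu_agree w (s i) hk, mu_agree w (s (i + 1)) (lt_of_lt_of_le hk hmu)]
    · exact hilen
    · exact hi1len
    · rcases lt_or_eq_of_le hmu with h | h
      · have := mu_agree w (s (i + 1)) h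
        rw [this]
        exact ne_of_lt (hmis i h1 hiN).2
      · have hd := hdist i (i + 1) h1 hiN (le_trans h1 (Nat.le_succ i)) hN
          (Nat.ne_of_lt (Nat.lt_succ_self i)) h
        rw [← h] at hd
        exact hd
  refine ⟨mono, lcpmu, ?_⟩
  intro i j h1 hij hN
  rw [lcpmu i h1 (le_trans (Nat.add_le_add_right hij 1) hN),
    lcpmu j (le_trans h1 hij) hN]
  exact mono i j h1 hij (le_trans (Nat.le_succ j) hN)
end

section
/- Let Y be a natural number, ε ∈ [0,1], and consider Y independent coordinates, each taking the value none with probability 1 − ε and each value some v, for v ∈ Fin 3, with probability ε/3 (i.e., the product over Fin Y of this distribution on Option (Fin 3)). For every e ≤ 3, the probability of the event that exactly e coordinates are different from none and the values carried by those e coordinates are pairwise distinct equals C(Y,e) · (1 − ε)^{Y−e} · ε^e · c_e, where c_0 = c_1 = 1, c_2 = 2/3, c_3 = 2/9. -/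
/-- The constants of Proposition 1: `c 0 = c 1 = 1`, `c 2 = 2/3`, `c 3 = 2/9`. -/
noncomputable def errDistinctConst : ℕ → ℝ
  | 0 => 1
  | 1 => 1
  | 2 => 2 / 3
  | _ => 2 / 9

/-- The probability weight of a single coordinate: `none` (no sequencing error) has
probability `1 - ε`, and each of the three erroneous letters `some v` has
probability `ε / 3`. -/
noncomputable def errWeight (ε : ℝ) : Option (Fin 3) → ℝ
  | none => 1 - ε
  | some _ => ε / 3

def fiberEquiv (Y : ℕ) (S : Finset (Fin Y)) :
    {ω : Fin Y → Option (Fin 3) //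
      (Finset.univ.filter fun i => ω i ≠ none) = S ∧
      (∀ i j : Fin Y, i ≠ j → ω i ≠ none → ω j ≠ none → ω i ≠ ω j)} ≃
    ({x // x ∈ S} ↪ Fin 3) where
  toFun := fun ⟨ω, h1, h2⟩ =>
    ⟨fun x => (ω x.1).get (by
        have hx : x.1 ∈ Finset.univ.filter fun i => ω i ≠ none := h1.symm ▸ x.2
        have := (Finset.mem_filter.mp hx).2
        exact Option.ne_none_iff_isSome.mp this),
      by
        intro x y hxy
        have hx : ω x.1 ≠ none := by
          have hx : x.1 ∈ Finset.univ.filter fun i => ω i ≠ none := h1.symm ▸ x.2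
          exact (Finset.mem_filter.mp hx).2
        have hy : ω y.1 ≠ none := by
          have hy : y.1 ∈ Finset.univ.filter fun i => ω i ≠ none := h1.symm ▸ y.2
          exact (Finset.mem_filter.mp hy).2
        have hval : ω x.1 = ω y.1 := by
          rw [← Option.some_get (Option.ne_none_iff_isSome.mp hx),
            ← Option.some_get (Option.ne_none_iff_isSome.mp hy)]
          exact congrArg some hxy
        by_contra hne
        exact h2 x.1 y.1 (fun h => hne (Subtype.ext h)) hx hy hval⟩
  invFun := fun f =>
    ⟨fun i => if h : i ∈ S then some (f ⟨i, h⟩) else none, by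
      constructor
      · ext i
        simp only [Finset.mem_filter, Finset.mem_univ, true_and]
        by_cases h : i ∈ S <;> simp [h]
      · intro i j hij hi hj
        have hi' : i ∈ S := by by_contra h; simp [h] at hi
        have hj' : j ∈ S := by by_contra h; simp [h] at hj
        simp only [dif_pos hi', dif_pos hj', ne_eq, Option.some_inj]
        intro h
        exact hij (Subtype.ext_iff.mp (f.injective h))⟩
  left_inv := fun ⟨ω, h1, h2⟩ => by
    apply Subtype.ext
    funext i
    by_cases h : i ∈ S
    · simp only [dif_pos h]
      exact Option.some_get _
    · simp only [dif_neg h]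
      have : i ∉ Finset.univ.filter fun j => ω j ≠ none := h1 ▸ h
      simp only [Finset.mem_filter, Finset.mem_univ, true_and, not_not] at this
      exact this.symm
  right_inv := fun f => by
    ext x
    simp [dif_pos x.2]

lemma count_distinct_errors (Y e : ℕ) :
    (Finset.univ.filter fun ω : Fin Y → Option (Fin 3) =>
      (Finset.univ.filter fun i => ω i ≠ none).card = e ∧
      (∀ i j : Fin Y, i ≠ j → ω i ≠ none → ω j ≠ none → ω i ≠ ω j)).card
    = Y.choose e * Nat.descFactorial 3 e := by
  rw [Finset.card_eq_sum_card_fiberwise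
    (f := fun ω : Fin Y → Option (Fin 3) => Finset.univ.filter fun i => ω i ≠ none)
    (t := Finset.powersetCard e Finset.univ)
    (fun ω hω => Finset.mem_powersetCard_univ.mpr (Finset.mem_filter.mp hω).2.1)]
  have hfib : ∀ S ∈ Finset.powersetCard e (Finset.univ : Finset (Fin Y)),
      ((Finset.univ.filter fun ω : Fin Y → Option (Fin 3) =>
        (Finset.univ.filter fun i => ω i ≠ none).card = e ∧
        (∀ i j : Fin Y, i ≠ j → ω i ≠ none → ω j ≠ none → ω i ≠ ω j)).filter
        (fun ω => (Finset.univ.filter fun i => ω i ≠ none) = S)).card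
      = Nat.descFactorial 3 e := by
    intro S hS
    have hScard : S.card = e := Finset.mem_powersetCard_univ.mp hS
    have heq : ((Finset.univ.filter fun ω : Fin Y → Option (Fin 3) =>
        (Finset.univ.filter fun i => ω i ≠ none).card = e ∧
        (∀ i j : Fin Y, i ≠ j → ω i ≠ none → ω j ≠ none → ω i ≠ ω j)).filter
        (fun ω => (Finset.univ.filter fun i => ω i ≠ none) = S))
        = Finset.univ.filter (fun ω : Fin Y → Option (Fin 3) =>
          (Finset.univ.filter fun i => ω i ≠ none) = S ∧
          (∀ i j : Fin Y, i ≠ j → ω i ≠ none → ω j ≠ none → ω i ≠ ω j)) := by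
      rw [Finset.filter_filter]
      apply Finset.filter_congr
      intro ω _
      constructor
      · rintro ⟨⟨_, h2⟩, h3⟩; exact ⟨h3, h2⟩
      · rintro ⟨h3, h2⟩; exact ⟨⟨h3 ▸ hScard, h2⟩, h3⟩
    rw [heq, ← Fintype.card_subtype, Fintype.card_congr (fiberEquiv Y S),
      Fintype.card_embedding_eq, Fintype.card_coe, hScard]
    simp
  rw [Finset.sum_congr rfl hfib, Finset.sum_const, smul_eq_mul,
    Finset.card_powersetCard, Finset.card_univ, Fintype.card_fin]

/-- Under the product of `Y` independent copies of the distribution on `Option (Fin 3)`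
giving probability `1 - ε` to `none` and `ε / 3` to each `some v`, the probability that
exactly `e` coordinates differ from `none` and that the values carried by those
coordinates are pairwise distinct equals `C(Y,e) · (1-ε)^(Y-e) · ε^e · c_e`,
where `c_0 = c_1 = 1`, `c_2 = 2/3`, `c_3 = 2/9`  (for `e ≤ 3`). -/
theorem prob_exactly_e_distinct_errors (Y : ℕ) (ε : ℝ) (hε0 : 0 ≤ ε) (hε1 : ε ≤ 1)
    (e : ℕ) (he : e ≤ 3) :
    ∑ ω : Fin Y → Option (Fin 3),
        (if (Finset.univ.filter fun i => ω i ≠ none).card = e ∧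
            (∀ i j : Fin Y, i ≠ j → ω i ≠ none → ω j ≠ none → ω i ≠ ω j)
          then ∏ i, errWeight ε (ω i) else 0)
      = (Y.choose e : ℝ) * (1 - ε) ^ (Y - e) * ε ^ e * errDistinctConst e := by
  rw [← Finset.sum_filter]
  have hconst : ∀ ω ∈ (Finset.univ.filter fun ω : Fin Y → Option (Fin 3) =>
      (Finset.univ.filter fun i => ω i ≠ none).card = e ∧
      (∀ i j : Fin Y, i ≠ j → ω i ≠ none → ω j ≠ none → ω i ≠ ω j)),
      (∏ i, errWeight ε (ω i)) = (1 - ε) ^ (Y - e) * (ε / 3) ^ e := by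
    intro ω hω
    obtain ⟨hcard, -⟩ := (Finset.mem_filter.mp hω).2
    rw [← Finset.prod_filter_mul_prod_filter_not Finset.univ (fun i => ω i ≠ none)]
    have h1 : (∏ i ∈ Finset.univ.filter fun i => ω i ≠ none, errWeight ε (ω i))
        = (ε / 3) ^ e := by
      rw [Finset.prod_congr rfl (fun i hi => ?_), Finset.prod_const, hcard]
      have : ω i ≠ none := (Finset.mem_filter.mp hi).2
      obtain ⟨v, hv⟩ := Option.ne_none_iff_exists'.mp this
      rw [hv]; rfl
    have h2 : (∏ i ∈ Finset.univ.filter fun i => ¬ω i ≠ none, errWeight ε (ω i))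
        = (1 - ε) ^ (Y - e) := by
      rw [Finset.prod_congr rfl (fun i hi => ?_), Finset.prod_const]
      · congr 1
        have := Finset.card_filter_add_card_filter_not
          (s := (Finset.univ : Finset (Fin Y))) (fun i => ω i ≠ none)
        rw [Finset.card_univ, Fintype.card_fin, hcard] at this
        omega
      · have : ω i = none := not_not.mp (Finset.mem_filter.mp hi).2
        rw [this]; rfl
    rw [h1, h2]; ring
  rw [Finset.sum_congr rfl hconst, Finset.sum_const, nsmul_eq_mul,
    count_distinct_errors]
  have h3 : e = 0 ∨ e = 1 ∨ e = 2 ∨ e = 3 := by omega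
  rcases h3 with rfl | rfl | rfl | rfl <;>
    simp [errDistinctConst, Nat.descFactorial] <;> push_cast <;> ring
end

section
/- Let ε ∈ [0,1] be a real number and set c_0 = c_1 = 1, c_2 = 2/3, c_3 = 2/9. Define g(Y) = Σ_{e=0}^{3} C(Y,e) · (1 − ε)^{Y−e} · ε^e · c_e. Then g is non-increasing for Y ≥ 3: for every natural number Y ≥ 3, g(Y+1) ≤ g(Y). -/
/-- `g Y = Σ_{e=0}^{3} C(Y,e) · (1-ε)^(Y-e) · ε^e · c_e`: the probability that among
`Y` independent trials, each erring with probability `ε`, at most `3` err and the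
erred values (uniform among `3` alternatives) are pairwise distinct. -/
noncomputable def g (ε : ℝ) (Y : ℕ) : ℝ :=
  ∑ e ∈ Finset.range 4, (Y.choose e : ℝ) * (1 - ε) ^ (Y - e) * ε ^ e * errDistinctConst e

/-- The probability bound `g` of Proposition 1 is non-increasing for `Y ≥ 3`. -/
theorem g_antitone (ε : ℝ) (hε0 : 0 ≤ ε) (hε1 : ε ≤ 1) (Y : ℕ) (hY : 3 ≤ Y) :
    g ε (Y + 1) ≤ g ε Y := by
  obtain ⟨k, rfl⟩ : ∃ k, Y = k + 3 := ⟨Y - 3, by omega⟩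
  simp only [g, Finset.sum_range_succ, Finset.sum_range_zero, errDistinctConst]
  have h0 : k + 3 + 1 - 0 = k + 4 := by omega
  have h1 : k + 3 + 1 - 1 = k + 3 := by omega
  have h2 : k + 3 + 1 - 2 = k + 2 := by omega
  have h3 : k + 3 + 1 - 3 = k + 1 := by omega
  have h0' : k + 3 - 0 = k + 3 := by omega
  have h1' : k + 3 - 1 = k + 2 := by omega
  have h2' : k + 3 - 2 = k + 1 := by omega
  have h3' : k + 3 - 3 = k := by omega
  rw [h0, h1, h2, h3, h0', h1', h2', h3']
  have c1 : (k + 3 + 1).choose 1 = (k+3).choose 0 + (k+3).choose 1 := Nat.choose_succ_succ _ _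
  have c2 : (k + 3 + 1).choose 2 = (k+3).choose 1 + (k+3).choose 2 := Nat.choose_succ_succ _ _
  have c3 : (k + 3 + 1).choose 3 = (k+3).choose 2 + (k+3).choose 3 := Nat.choose_succ_succ _ _
  rw [c1, c2, c3]
  simp only [Nat.choose_zero_right]
  set A := ((k+3).choose 1 : ℝ) with hA
  set B := ((k+3).choose 2 : ℝ) with hB
  set C := ((k+3).choose 3 : ℝ) with hC
  have hAn : 0 ≤ A := by positivity
  have hBn : 0 ≤ B := by positivity
  have hCn : 0 ≤ C := by positivity
  have hq : (0:ℝ) ≤ 1 - ε := by linarith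
  have hp : (0:ℝ) ≤ (1-ε)^k := pow_nonneg hq k
  push_cast
  have key :
      (0 + 1 * (1-ε)^(k+3) * ε^0 * 1 + A * (1-ε)^(k+2) * ε^1 * 1
        + B * (1-ε)^(k+1) * ε^2 * (2/3) + C * (1-ε)^k * ε^3 * (2/9))
      - (0 + 1 * (1-ε)^(k+4) * ε^0 * 1 + (1 + A) * (1-ε)^(k+3) * ε^1 * 1
        + (A + B) * (1-ε)^(k+2) * ε^2 * (2/3) + (B + C) * (1-ε)^(k+1) * ε^3 * (2/9))
      = (1-ε)^k * ε^2 * (A * (1-ε)^2 * (1/3) + B * (1-ε) * ε * (4/9) + C * ε^2 * (2/9)) := by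
    have e1 : (1-ε)^(k+1) = (1-ε)^k * (1-ε) := by ring
    have e2 : (1-ε)^(k+2) = (1-ε)^k * (1-ε)^2 := by ring
    have e3 : (1-ε)^(k+3) = (1-ε)^k * (1-ε)^3 := by ring
    have e4 : (1-ε)^(k+4) = (1-ε)^k * (1-ε)^4 := by ring
    rw [e1, e2, e3, e4]; ring
  have hnn : 0 ≤ (1-ε)^k * ε^2 * (A * (1-ε)^2 * (1/3) + B * (1-ε) * ε * (4/9) + C * ε^2 * (2/9)) := by positivity
  linarith [key]
end
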